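/- Let (A, ⋆) be a nontrivial finite group and 𝒜 = M(B_k(A), χ_k(A)) the Mealy automaton obtained from the De Bruijn automaton of order k with the coloring sending ys →^x sx to output x ⋆ y^{-1}. Then 𝒜 is an invertible reset Mealy automaton with pairwise distinct modified state functions; in particular, for distinct states q ≠ q' in A^k and any v ∈ A^k, one has q ∘ v ≠ q' ∘ v, and the semigroup S(𝒜) generated by {𝒜_q : q ∈ A^k} is free. -/

import Mathlib

/-!
A state of the De Bruijn automaton is the window of the last `k` letters read, so a word is
synchronizing iff it has length at least `k`, and `𝒜_q` divides every letter on the right by the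
letter `k` places earlier (by the matching letter of `q` in the first `k` places). Read in blocks
of length `k`, each `𝒜_q` is therefore a discrete derivative of sequences in the group `A^k`.
A product of `n` generators sends a block `b` followed by enough identity blocks to a word whose block `n`
is `b^{±1}` and whose later blocks are trivial, which recovers `n`; sent through identity blocks,
its last block is `r^{±1}` for the generator `r` applied first, which recovers `r`. As every `𝒜_r`
is surjective it cancels on the right, and induction on the length gives freeness.
-/

/-- The action of a DFA transition function on words. -/
def dfaRun {Q A : Type*} (δ : Q → A → Q) (q : Q) (u : List A) : Q := u.foldl δ q

/-- The sequential transformation of `A*` induced by a state of a Mealy automaton. -/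
def mealyMap {Q A : Type*} (δ : Q → A → Q) (lam : Q → A → A) : Q → List A → List A
  | _, [] => []
  | q, a :: u => lam q a :: mealyMap δ lam (δ q a) u

/-- The set of synchronizing (reset) words of the underlying DFA. -/
def synSet {Q A : Type*} [Fintype Q] [DecidableEq Q] (δ : Q → A → Q) : Set (List A) :=
  {u | (Finset.univ.image fun q => dfaRun δ q u).card = 1}

/-- The transition function of the De Bruijn automaton of order `k`. -/
def dbStep (A : Type*) (k : ℕ) (q : Fin k → A) (x : A) : Fin k → A :=
  fun i => if h : (i : ℕ) + 1 < k then q ⟨(i : ℕ) + 1, h⟩ else x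

/-- The output function of the group coloring `χ_k(A)`. -/
def dbOut {A : Type*} [Group A] (k : ℕ) [NeZero k] (q : Fin k → A) (x : A) : A :=
  x * (q 0)⁻¹

theorem List.replicate_one_eq_ofFn_one {M : Type*} [One M] (n : ℕ) :
    List.replicate n (1 : M) = List.ofFn (1 : Fin n → M) :=
  (List.ofFn_const n 1).symm

section Mealy

variable {Q A : Type*} (δ : Q → A → Q) (lam : Q → A → A)

theorem dfaRun_append (q : Q) (u v : List A) :
    dfaRun δ q (u ++ v) = dfaRun δ (dfaRun δ q u) v :=
  List.foldl_append

theorem mealyMap_length (q : Q) (u : List A) : (mealyMap δ lam q u).length = u.length := by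
  induction u generalizing q with
  | nil => rfl
  | cons a u ih => simp [mealyMap, ih]

theorem mealyMap_append (q : Q) (u v : List A) :
    mealyMap δ lam q (u ++ v) = mealyMap δ lam q u ++ mealyMap δ lam (dfaRun δ q u) v := by
  induction u generalizing q with
  | nil => rfl
  | cons a u ih => simp [mealyMap, ih, dfaRun]

theorem mealyMap_surjective (hlam : ∀ q, Function.Surjective (lam q)) (q : Q) :
    Function.Surjective (mealyMap δ lam q) := by
  intro w
  induction w generalizing q with
  | nil => exact ⟨[], rfl⟩
  | cons b w ih =>
    obtain ⟨a, rfl⟩ := hlam q b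
    obtain ⟨u, hu⟩ := ih (δ q a)
    exact ⟨a :: u, by rw [mealyMap, hu]⟩

theorem mem_synSet_iff [Fintype Q] [DecidableEq Q] [Nonempty Q] (u : List A) :
    u ∈ synSet δ ↔ ∀ p q, dfaRun δ p u = dfaRun δ q u := by
  simp only [synSet, Set.mem_ofPred_eq, Finset.card_eq_one, Finset.eq_singleton_iff_unique_mem,
    Finset.mem_image, Finset.mem_univ, true_and]
  constructor
  · rintro ⟨s, -, hs⟩ p q
    rw [hs _ ⟨p, rfl⟩, hs _ ⟨q, rfl⟩]
  · intro h
    obtain ⟨p⟩ := ‹Nonempty Q›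
    exact ⟨dfaRun δ p u, ⟨p, rfl⟩, by rintro _ ⟨q, rfl⟩; exact h q p⟩

end Mealy

section DeBruijn

variable {A : Type*} {k : ℕ} [NeZero k]

theorem ofFn_append_cons_eq_cons_dbStep (q : Fin k → A) (x : A) (u : List A) :
    List.ofFn q ++ x :: u = q 0 :: (List.ofFn (dbStep A k q x) ++ u) := by
  suffices List.ofFn q ++ [x] = q 0 :: List.ofFn (dbStep A k q x) by
    rw [← List.singleton_append, ← List.append_assoc, this, List.cons_append]
  apply List.ext_getElem (by simp)
  intro n h₁ h₂
  rcases n with _ | n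
  · rw [List.getElem_append_left (by simpa using NeZero.pos k)]
    simp
  · simp only [List.length_append, List.length_ofFn, List.length_singleton] at h₁
    by_cases hn : n + 1 < k
    · rw [List.getElem_append_left (by simpa using hn)]
      simp [dbStep, hn]
    · rw [List.getElem_append_right (by simp; omega)]
      simp [dbStep, hn]

theorem ofFn_dfaRun_dbStep (q : Fin k → A) (u : List A) :
    List.ofFn (dfaRun (dbStep A k) q u) = (List.ofFn q ++ u).drop u.length := by
  induction u generalizing q with
  | nil => simp [dfaRun]
  | cons x u ih =>
    show List.ofFn (dfaRun (dbStep A k) (dbStep A k q x) u) = _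
    rw [List.length_cons, ofFn_append_cons_eq_cons_dbStep, List.drop_succ_cons]
    exact ih _

theorem dfaRun_dbStep_ofFn (q v : Fin k → A) : dfaRun (dbStep A k) q (List.ofFn v) = v :=
  List.ofFn_injective <| by rw [ofFn_dfaRun_dbStep, List.drop_left' (by simp)]

theorem dfaRun_dbStep_apply_zero (q : Fin k → A) {u : List A} (hu : u.length < k) :
    dfaRun (dbStep A k) q u 0 = q ⟨u.length, hu⟩ := by
  have hq : u.length < (List.ofFn q).length := by simpa using hu
  have := congrArg (·[0]?) (ofFn_dfaRun_dbStep q u)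
  simpa [NeZero.pos k, List.getElem_append_left hq] using this

theorem mem_synSet_dbStep_iff [Fintype A] [DecidableEq A] [Nontrivial A] (u : List A) :
    u ∈ synSet (dbStep A k) ↔ k ≤ u.length := by
  rw [mem_synSet_iff]
  constructor
  · intro h
    by_contra! hu
    obtain ⟨a, b, hab⟩ := exists_pair_ne A
    have := congrFun (h (fun _ => a) (fun _ => b)) 0
    rw [dfaRun_dbStep_apply_zero _ hu, dfaRun_dbStep_apply_zero _ hu] at this
    exact hab this
  · intro hu p q
    apply List.ofFn_injective
    simp [ofFn_dfaRun_dbStep, List.drop_append, List.drop_eq_nil_of_le, hu]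

end DeBruijn

section Coloring

variable {A : Type*} [Group A] {k : ℕ} [NeZero k]

local notation "𝒜" => mealyMap (dbStep A k) (dbOut k)

theorem dbOut_bijective (q : Fin k → A) : Function.Bijective (dbOut k q) :=
  (Equiv.mulRight (q 0)⁻¹).bijective

theorem mealyMap_dbOut_eq_zipWith (q : Fin k → A) (u : List A) :
    𝒜 q u = List.zipWith (fun x y => x * y⁻¹) u (List.ofFn q ++ u) := by
  induction u generalizing q with
  | nil => rfl
  | cons x u ih =>
    rw [ofFn_append_cons_eq_cons_dbStep, List.zipWith_cons_cons, ← ih]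
    rfl

theorem mealyMap_dbOut_ofFn (q v : Fin k → A) : 𝒜 q (List.ofFn v) = List.ofFn (v * q⁻¹) := by
  rw [mealyMap_dbOut_eq_zipWith, ← List.append_nil (List.ofFn v), List.zipWith_append (by simp)]
  exact List.ext_getElem (by simp) fun n _ _ => by simp

theorem mealyMap_dbOut_ofFn_append (q v : Fin k → A) (u : List A) :
    𝒜 q (List.ofFn v ++ u) = List.ofFn (v * q⁻¹) ++ 𝒜 v u := by
  rw [mealyMap_append, mealyMap_dbOut_ofFn, dfaRun_dbStep_ofFn]

theorem mealyMap_dbOut_one_replicate (n : ℕ) :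
    𝒜 1 (List.replicate n (1 : A)) = List.replicate n 1 := by
  induction n with
  | zero => rfl
  | succ n ih =>
    have hstep : dbStep A k 1 1 = 1 := by
      funext i
      simp [dbStep]
    simp [List.replicate_succ, mealyMap, dbOut, hstep, ih]

def dbEnd (q : Fin k → A) : Function.End (List A) := 𝒜 q

def dbComp (qs : List (Fin k → A)) : Function.End (List A) := (qs.map dbEnd).prod

theorem dbComp_cons (q : Fin k → A) (qs : List (Fin k → A)) (u : List A) :
    dbComp (q :: qs) u = 𝒜 q (dbComp qs u) := rfl

theorem dbComp_append_singleton (qs : List (Fin k → A)) (q : Fin k → A) (u : List A) :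
    dbComp (qs ++ [q]) u = dbComp qs (𝒜 q u) := by
  simp only [dbComp, List.map_append, List.prod_append, List.map_cons, List.map_nil,
    List.prod_singleton]
  rfl

theorem dbComp_ofFn_append_replicate (qs : List (Fin k → A)) (b : Fin k → A) {N : ℕ}
    (hN : qs.length ≤ N) :
    ∃ w : List A, w.length = qs.length * k ∧
      dbComp qs (List.ofFn b ++ List.replicate (N * k) 1) =
        w ++ List.ofFn (Inv.inv^[qs.length] b) ++ List.replicate ((N - qs.length) * k) 1 := by
  induction qs with
  | nil => exact ⟨[], by simp, rfl⟩
  | cons q qs ih =>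
    simp only [List.length_cons] at hN ⊢
    obtain ⟨w, hw, hcomp⟩ := ih (by omega)
    obtain ⟨M, hM⟩ : ∃ M, N - qs.length = M + 1 := ⟨N - qs.length - 1, by omega⟩
    refine ⟨𝒜 q (w ++ List.ofFn (Inv.inv^[qs.length] b)), ?_, ?_⟩
    · simp [mealyMap_length, hw, add_mul]
    · rw [dbComp_cons, hcomp, hM, show (M + 1) * k = k + M * k by ring, List.replicate_add,
        List.replicate_one_eq_ofFn_one k, mealyMap_append (v := List.ofFn 1 ++ _),
        dfaRun_append, dfaRun_dbStep_ofFn, mealyMap_dbOut_ofFn_append,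
        mealyMap_dbOut_one_replicate, show N - (qs.length + 1) = M by omega,
        Function.iterate_succ_apply', one_mul, List.append_assoc]

theorem length_eq_of_dbComp_eq [Nontrivial A] {qs ps : List (Fin k → A)}
    (h : dbComp qs = dbComp ps) : qs.length = ps.length := by
  by_contra hne
  wlog hlt : qs.length < ps.length generalizing qs ps
  · exact this h.symm (Ne.symm hne) (by omega)
  obtain ⟨b, hb⟩ := exists_ne (1 : Fin k → A)
  obtain ⟨w, -, hw⟩ := dbComp_ofFn_append_replicate qs b hlt.le
  obtain ⟨w', -, hw'⟩ := dbComp_ofFn_append_replicate ps b le_rfl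
  obtain ⟨M, hM⟩ : ∃ M, ps.length - qs.length = M + 1 := ⟨ps.length - qs.length - 1, by omega⟩
  rw [h, hw', hM, Nat.sub_self, zero_mul, List.replicate_zero, List.append_nil,
    show (M + 1) * k = M * k + k by ring, List.replicate_add, List.replicate_one_eq_ofFn_one k,
    ← List.append_assoc] at hw
  have hlast := List.ofFn_injective (List.append_inj' hw (by simp)).2
  exact hb (inv_injective.iterate ps.length (hlast.trans (Function.iterate_fixed inv_one _).symm))

theorem eq_of_dbComp_append_singleton_eq {qs ps : List (Fin k → A)} {q p : Fin k → A}
    (hlen : qs.length = ps.length) (h : dbComp (qs ++ [q]) = dbComp (ps ++ [p])) : q = p := by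
  have last_block : ∀ (rs : List (Fin k → A)) (r : Fin k → A), ∃ w : List A,
      dbComp (rs ++ [r]) (List.ofFn (1 : Fin k → A) ++ List.replicate (rs.length * k) 1) =
        w ++ List.ofFn (Inv.inv^[rs.length] r⁻¹) := by
    intro rs r
    obtain ⟨w, -, hw⟩ := dbComp_ofFn_append_replicate rs r⁻¹ le_rfl
    refine ⟨w, ?_⟩
    rw [dbComp_append_singleton, mealyMap_dbOut_ofFn_append, mealyMap_dbOut_one_replicate,
      one_mul, hw, Nat.sub_self, zero_mul, List.replicate_zero, List.append_nil]
  obtain ⟨w, hw⟩ := last_block qs q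
  obtain ⟨w', hw'⟩ := last_block ps p
  rw [h, hlen, hw'] at hw
  have hlast := List.ofFn_injective (List.append_inj' hw (by simp)).2
  exact inv_injective (inv_injective.iterate _ hlast.symm)

theorem dbComp_injective [Nontrivial A] :
    Function.Injective (dbComp : List (Fin k → A) → Function.End (List A)) := by
  intro qs
  induction qs using List.reverseRecOn with
  | nil =>
    intro ps h
    exact (List.length_eq_zero_iff.1 (length_eq_of_dbComp_eq h).symm).symm
  | append_singleton qs q ih =>
    intro ps h
    obtain ⟨ps, p, rfl⟩ : ∃ ps' p, ps = ps' ++ [p] := by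
      rcases List.eq_nil_or_concat' ps with rfl | hps
      · simpa using length_eq_of_dbComp_eq h
      · exact hps
    have hlen : qs.length = ps.length := by simpa using length_eq_of_dbComp_eq h
    obtain rfl := eq_of_dbComp_append_singleton_eq hlen h
    have hsurj := mealyMap_surjective (dbStep A k) (dbOut k) (fun r => (dbOut_bijective r).2) q
    have hcancel : dbComp qs = dbComp ps := hsurj.injective_comp_right <| funext fun u => by
      have hu := congrFun h u
      rwa [dbComp_append_singleton, dbComp_append_singleton] at hu
    rw [ih hcancel]

theorem lift_dbEnd (s : FreeSemigroup (Fin k → A)) :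
    FreeSemigroup.lift dbEnd s = dbComp (s.head :: s.tail) := by
  induction s using FreeSemigroup.recOnMul with
  | ih1 x => rfl
  | ih2 x y _ ih => rw [FreeSemigroup.lift_of_mul, ih]; rfl

end Coloring

/-- The Mealy automaton `M(B_k(A), χ_k(A))` is an invertible reset Mealy automaton with
pairwise distinct modified state functions; in particular `q ∘ v ≠ q' ∘ v` for distinct
states `q ≠ q'` and `v ∈ A^k`, and the generated semigroup is free. -/
theorem stmt16 {A : Type*} [Group A] [Fintype A] [DecidableEq A] [Nontrivial A]
    (k : ℕ) [NeZero k] :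
    (∀ q : Fin k → A, Function.Bijective (dbOut k q)) ∧
    (∀ q : Fin k → A, ∀ u ∈ synSet (dbStep A k),
      mealyMap (dbStep A k) (dbOut k) q u ∈ synSet (dbStep A k)) ∧
    (∀ q q' : Fin k → A, q ≠ q' → ∃ u ∈ synSet (dbStep A k),
      ∃ p : Fin k → A, dfaRun (dbStep A k) p (mealyMap (dbStep A k) (dbOut k) q u) ≠
        dfaRun (dbStep A k) p (mealyMap (dbStep A k) (dbOut k) q' u)) ∧
    (∀ q q' : Fin k → A, q ≠ q' → ∀ v : Fin k → A,
      mealyMap (dbStep A k) (dbOut k) q (List.ofFn v) ≠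
        mealyMap (dbStep A k) (dbOut k) q' (List.ofFn v)) ∧
    Function.Injective
      ⇑(FreeSemigroup.lift
        (fun q : Fin k → A => (mealyMap (dbStep A k) (dbOut k) q : Function.End (List A))) :
          FreeSemigroup (Fin k → A) →ₙ* Function.End (List A)) := by
  refine ⟨dbOut_bijective, fun q u hu => ?_, fun q q' hne => ?_, fun q q' hne v => ?_, ?_⟩
  · rw [mem_synSet_dbStep_iff] at hu ⊢
    rwa [mealyMap_length]
  · refine ⟨List.ofFn (1 : Fin k → A), (mem_synSet_dbStep_iff _).2 (by simp), 1, ?_⟩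
    rwa [mealyMap_dbOut_ofFn, mealyMap_dbOut_ofFn, dfaRun_dbStep_ofFn, dfaRun_dbStep_ofFn,
      Ne, mul_right_inj, inv_inj]
  · rwa [mealyMap_dbOut_ofFn, mealyMap_dbOut_ofFn, Ne, List.ofFn_inj, mul_right_inj, inv_inj]
  · intro s t hst
    rw [FreeSemigroup.ext_iff, ← List.cons_eq_cons]
    apply dbComp_injective
    rw [← lift_dbEnd, ← lift_dbEnd]
    exact hst
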